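/- Let (x, y) be a vertex of the convex hull of feasible solutions of the uniform-capacity CKFL MIP, and let H be its untight subgraph (edges {i,j} with 0 < x_{ij} < s). Then H contains at most m facilities and at most 2m − 1 edges, where m = |D|. -/

import Mathlib

/-!
Let `E` be the untight edges, `F` the facilities they touch and `T ⊆ F` the facilities serving
exactly `s`. At a vertex, a matrix `z` supported on `E` with zero column sums and zero row sums
on `T` must vanish, since otherwise `(x ± t z, y)` is feasible for small `t`; so the incidence
vectors of `E` are independent and `|E| ≤ m + |T|`, with `|E| ≤ m - 1 + |T|` when `T = F`
because the constraints then have one dependency. Conversely every facility of `F` has an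
untight edge and every facility of `T` has two, so `|F| + |T| ≤ |E|`. Comparing the two bounds
gives `|F| ≤ m` and `|E| ≤ 2m - 1`.
-/

open scoped Classical

open Finset Filter Topology

theorem eq_zero_of_add_mem_of_sub_mem_extremePoints {E : Type*} [AddCommGroup E] [Module ℝ E]
    {A : Set E} {x v : E} (hx : x ∈ A.extremePoints ℝ) (hadd : x + v ∈ A) (hsub : x - v ∈ A) :
    v = 0 := by
  have hmid : x ∈ openSegment ℝ (x + v) (x - v) :=
    ⟨1 / 2, 1 / 2, by norm_num, by norm_num, by norm_num, by module⟩
  simpa using (mem_extremePoints.mp hx).2 _ hadd _ hsub hmid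

theorem eventually_le_add_mul {a b c : ℝ} (hle : c ≤ a) (hlt : b ≠ 0 → c < a) :
    ∀ᶠ t in 𝓝 (0 : ℝ), c ≤ a + t * b := by
  by_cases hb : b = 0
  · simp [hb, hle]
  · have hlim : Tendsto (fun t : ℝ => a + t * b) (𝓝 0) (𝓝 a) := by
      simpa using ((continuous_id.mul continuous_const).const_add a).tendsto (0 : ℝ)
    exact (hlim.eventually_const_lt (hlt hb)).mono fun _ => le_of_lt

theorem eventually_add_mul_le {a b c : ℝ} (hle : a ≤ c) (hlt : b ≠ 0 → a < c) :
    ∀ᶠ t in 𝓝 (0 : ℝ), a + t * b ≤ c := by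
  filter_upwards [eventually_le_add_mul (a := -a) (b := -b) (c := -c) (by linarith)
    (fun hb => by linarith [hlt (neg_ne_zero.mp hb)])] with t ht
  linarith

def ckflFeasible {ι κ : Type*} [Fintype ι] [Fintype κ] (s : ℝ) (d : κ → ℝ) (k : ℕ) :
    Set ((ι → κ → ℝ) × (ι → ℝ)) :=
  {p | (∀ i, p.2 i = 0 ∨ p.2 i = 1) ∧
    (∑ i, p.2 i) ≤ (k : ℝ) ∧
    (∀ i j, 0 ≤ p.1 i j) ∧
    (∀ j, (∑ i, p.1 i j) = d j) ∧
    (∀ i, (∑ j, p.1 i j) ≤ s * p.2 i)}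

section Feasible

variable {ι κ : Type*} [Fintype ι] [Fintype κ] {s : ℝ} {d : κ → ℝ} {k : ℕ}
  {x : ι → κ → ℝ} {y : ι → ℝ}

theorem eq_one_of_pos_of_mem_ckflFeasible (h : (x, y) ∈ ckflFeasible s d k) {i : ι} {j : κ}
    (hx : 0 < x i j) : y i = 1 := by
  obtain ⟨hy, -, hnonneg, -, hcap⟩ := h
  refine (hy i).resolve_left fun hy0 => ?_
  have : x i j ≤ ∑ j, x i j := single_le_sum (fun j _ => hnonneg i j) (mem_univ j)
  linarith [hcap i, show s * y i = 0 by simp [show y i = 0 from hy0]]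

theorem eventually_add_smul_mem_ckflFeasible (h : (x, y) ∈ ckflFeasible s d k)
    {z : ι → κ → ℝ} (hsupp : ∀ i j, ¬(0 < x i j ∧ x i j < s) → z i j = 0)
    (hcol : ∀ j, ∑ i, z i j = 0) (hrow : ∀ i, ∑ j, x i j = s * y i → ∑ j, z i j = 0) :
    ∀ᶠ t in 𝓝 (0 : ℝ), (x + t • z, y) ∈ ckflFeasible s d k := by
  obtain ⟨hy, hk, hnonneg, hdem, hcap⟩ := h
  have hnonneg' : ∀ i j, ∀ᶠ t in 𝓝 (0 : ℝ), 0 ≤ x i j + t * z i j := fun i j =>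
    eventually_le_add_mul (hnonneg i j) fun hz => (not_not.mp (mt (hsupp i j) hz)).1
  have hcap' : ∀ i, ∀ᶠ t in 𝓝 (0 : ℝ), ∑ j, x i j + t * ∑ j, z i j ≤ s * y i := fun i =>
    eventually_add_mul_le (hcap i) fun hz => (hcap i).lt_of_ne (mt (hrow i) hz)
  filter_upwards [eventually_all.mpr fun i => eventually_all.mpr (hnonneg' i),
    eventually_all.mpr hcap'] with t hnonneg_t hcap_t
  refine ⟨hy, hk, hnonneg_t, fun j => ?_, fun i => ?_⟩
  · simp [sum_add_distrib, ← mul_sum, hcol j, hdem j]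
  · simpa [sum_add_distrib, ← mul_sum] using hcap_t i

theorem eq_zero_of_mem_extremePoints_convexHull_ckflFeasible
    (hvx : (x, y) ∈ (convexHull ℝ (ckflFeasible s d k)).extremePoints ℝ)
    {z : ι → κ → ℝ} (hsupp : ∀ i j, ¬(0 < x i j ∧ x i j < s) → z i j = 0)
    (hcol : ∀ j, ∑ i, z i j = 0) (hrow : ∀ i, ∑ j, x i j = s * y i → ∑ j, z i j = 0) :
    z = 0 := by
  have hfeas :=
    eventually_add_smul_mem_ckflFeasible (extremePoints_convexHull_subset hvx) hsupp hcol hrow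
  have hboth : ∀ᶠ t in 𝓝[≠] (0 : ℝ),
      ((x + t • z, y) ∈ ckflFeasible s d k ∧ (x + (-t) • z, y) ∈ ckflFeasible s d k) ∧ t ≠ 0 :=
    ((hfeas.and ((continuous_neg.tendsto' 0 0 neg_zero).eventually hfeas)).filter_mono
      nhdsWithin_le_nhds).and self_mem_nhdsWithin
  obtain ⟨t, ⟨hplus, hminus⟩, ht⟩ := hboth.exists
  have htz : ((t • z, 0) : (ι → κ → ℝ) × (ι → ℝ)) = 0 :=
    eq_zero_of_add_mem_of_sub_mem_extremePoints hvx
      (subset_convexHull ℝ _ (by simpa using hplus))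
      (subset_convexHull ℝ _ (by simpa [neg_smul, ← sub_eq_add_neg] using hminus))
  simpa [ht] using congrArg Prod.fst htz

end Feasible

theorem card_add_card_filter_le_card {α β : Type*} {E : Finset β} {F : Finset α} {f : β → α}
    {P : α → Prop} (hEF : ∀ e ∈ E, f e ∈ F) (hone : ∀ a ∈ F, 1 ≤ #{e ∈ E | f e = a})
    (htwo : ∀ a ∈ F, P a → 2 ≤ #{e ∈ E | f e = a}) :
    #F + #{a ∈ F | P a} ≤ #E := by
  rw [card_eq_sum_card_fiberwise hEF, card_filter, card_eq_sum_ones, ← sum_add_distrib]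
  refine sum_le_sum fun a ha => ?_
  split_ifs with hP
  exacts [htwo a ha hP, hone a ha]

theorem exists_ne_pos_lt_of_sum_eq {κ : Type*} [Fintype κ] {v : κ → ℝ} {s : ℝ} {j₀ : κ}
    (hv : ∀ j, 0 ≤ v j) (hsum : ∑ j, v j = s) (hj₀ : 0 < v j₀ ∧ v j₀ < s) :
    ∃ j ≠ j₀, 0 < v j ∧ v j < s := by
  have hrest : ∑ j ∈ univ.erase j₀, v j = s - v j₀ := by
    rw [← hsum, sum_erase_eq_sub (mem_univ j₀)]
  obtain ⟨j, hj, hpos⟩ : ∃ j ∈ univ.erase j₀, (0 : ℝ) < v j :=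
    exists_lt_of_sum_lt (by simpa [hrest] using hj₀.2)
  have hle : v j ≤ ∑ j ∈ univ.erase j₀, v j := single_le_sum (fun j _ => hv j) hj
  exact ⟨j, ne_of_mem_erase hj, hpos, by linarith⟩

/-- The incidence vectors of the cells of `E` in the row constraints `R` and column constraints
`C` are linearly independent. -/
def MarginRigid {ι κ : Type*} [Fintype ι] [Fintype κ] (E : Finset (ι × κ)) (R : Finset ι)
    (C : Finset κ) : Prop :=
  ∀ z : ι → κ → ℝ, (∀ i j, (i, j) ∉ E → z i j = 0) → (∀ j ∈ C, ∑ i, z i j = 0) →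
    (∀ i ∈ R, ∑ j, z i j = 0) → z = 0

namespace MarginRigid

variable {ι κ : Type*} [Fintype ι] [Fintype κ] {E : Finset (ι × κ)} {R : Finset ι}

theorem card_le {C : Finset κ} (h : MarginRigid E R C) : #E ≤ #C + #R := by
  let margins : (E → ℝ) →ₗ[ℝ] (C → ℝ) × (R → ℝ) :=
    ((LinearMap.pi fun j : C => ∑ i, LinearMap.proj (i, (j : κ))).prod
      (LinearMap.pi fun i : R => ∑ j, LinearMap.proj ((i : ι), j))).comp
      (Function.ExtendByZero.linearMap ℝ (Subtype.val : E → ι × κ))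
  have hinj : Function.Injective margins := by
    refine (injective_iff_map_eq_zero margins).mpr fun w hw => ?_
    have hz := h (fun i j => Function.extend Subtype.val w 0 (i, j))
      (fun i j hij => Function.extend_apply' _ _ _ fun ⟨e, he⟩ => hij (he ▸ e.2))
      (fun j hj => by simpa [margins] using congrFun (congrArg Prod.fst hw) ⟨j, hj⟩)
      (fun i hi => by simpa [margins] using congrFun (congrArg Prod.snd hw) ⟨i, hi⟩)
    funext e
    simpa [Subtype.val_injective.extend_apply] using congrFun (congrFun hz e.1.1) e.1.2
  simpa [Module.finrank_prod] using LinearMap.finrank_le_finrank_of_injective hinj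

/-- The column constraints sum to the row constraints, so one of them is redundant. -/
theorem erase (h : MarginRigid E R univ) (hER : ∀ p ∈ E, p.1 ∈ R) (j₀ : κ) :
    MarginRigid E R (univ.erase j₀) := by
  intro z hsupp hcol hrow
  refine h z hsupp (fun j _ => ?_) hrow
  have hrow' : ∀ i, ∑ j, z i j = 0 := fun i => by
    by_cases hi : i ∈ R
    · exact hrow i hi
    · exact sum_eq_zero fun j _ => hsupp i j fun hij => hi (hER _ hij)
  have htotal : ∑ j, ∑ i, z i j = ∑ i, z i j₀ :=
    Fintype.sum_eq_single j₀ fun j hj => hcol j (mem_erase.mpr ⟨hj, mem_univ j⟩)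
  rw [sum_comm] at htotal
  by_cases hj : j = j₀
  · simpa [hj, hrow'] using htotal.symm
  · exact hcol j (mem_erase.mpr ⟨hj, mem_univ j⟩)

end MarginRigid

section Untight

variable {ι κ : Type*} [Fintype ι] [Fintype κ]

noncomputable def untightEdges (x : ι → κ → ℝ) (s : ℝ) : Finset (ι × κ) :=
  univ.filter fun p : ι × κ => 0 < x p.1 p.2 ∧ x p.1 p.2 < s

noncomputable def untightFacilities (x : ι → κ → ℝ) (s : ℝ) : Finset ι :=
  univ.filter fun i : ι => ∃ j, 0 < x i j ∧ x i j < s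

variable {x : ι → κ → ℝ} {s : ℝ}

theorem fst_mem_untightFacilities {p : ι × κ} (hp : p ∈ untightEdges x s) :
    p.1 ∈ untightFacilities x s := by
  simp only [untightEdges, untightFacilities, mem_filter, mem_univ, true_and] at hp ⊢
  exact ⟨p.2, hp⟩

theorem card_untightFacilities_add_card_filter_le (hx : ∀ i j, 0 ≤ x i j) :
    #(untightFacilities x s) + #{i ∈ untightFacilities x s | ∑ j, x i j = s} ≤
      #(untightEdges x s) := by
  refine card_add_card_filter_le_card (fun _ => fst_mem_untightFacilities)
    (fun i hi => ?_) fun i hi hsat => ?_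
  all_goals obtain ⟨j, hj⟩ := (mem_filter.mp hi).2
  · exact card_pos.mpr ⟨(i, j), by simp [untightEdges, hj.1, hj.2]⟩
  · obtain ⟨j', hj'ne, hj'⟩ := exists_ne_pos_lt_of_sum_eq (hx i) hsat hj
    exact one_lt_card.mpr ⟨(i, j), by simp [untightEdges, hj.1, hj.2], (i, j'),
      by simp [untightEdges, hj'.1, hj'.2], by simp [hj'ne.symm]⟩

theorem marginRigid_untightEdges {d : κ → ℝ} {k : ℕ} {y : ι → ℝ}
    (hvx : (x, y) ∈ (convexHull ℝ (ckflFeasible s d k)).extremePoints ℝ) :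
    MarginRigid (untightEdges x s) {i ∈ untightFacilities x s | ∑ j, x i j = s} univ := by
  intro z hsupp hcol hrow
  refine eq_zero_of_mem_extremePoints_convexHull_ckflFeasible hvx
    (fun i j hij => hsupp i j (by simpa [untightEdges] using hij))
    (fun j => hcol j (mem_univ j)) fun i hsat => ?_
  by_cases hi : i ∈ untightFacilities x s
  · obtain ⟨j, hj⟩ := (mem_filter.mp hi).2
    rw [eq_one_of_pos_of_mem_ckflFeasible (extremePoints_convexHull_subset hvx) hj.1,
      mul_one] at hsat
    exact hrow i (mem_filter.mpr ⟨hi, hsat⟩)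
  · exact sum_eq_zero fun j _ => hsupp i j fun hij => hi (fst_mem_untightFacilities hij)

end Untight

theorem stmt_9_general {ι κ : Type*} [Fintype ι] [Fintype κ]
    (s : ℝ) (d : κ → ℝ) (k : ℕ)
    (S : Set ((ι → κ → ℝ) × (ι → ℝ)))
    (hS : S = {p | (∀ i, p.2 i = 0 ∨ p.2 i = 1) ∧
      (∑ i, p.2 i) ≤ (k : ℝ) ∧
      (∀ i j, 0 ≤ p.1 i j) ∧
      (∀ j, (∑ i, p.1 i j) = d j) ∧
      (∀ i, (∑ j, p.1 i j) ≤ s * p.2 i)})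
    (x : ι → κ → ℝ) (y : ι → ℝ)
    (hvx : (x, y) ∈ (convexHull ℝ S).extremePoints ℝ) :
    (Finset.univ.filter fun i : ι => ∃ j, 0 < x i j ∧ x i j < s).card ≤
        Fintype.card κ ∧
    (Finset.univ.filter fun p : ι × κ => 0 < x p.1 p.2 ∧ x p.1 p.2 < s).card ≤
        2 * Fintype.card κ - 1 := by
  subst hS
  change (x, y) ∈ (convexHull ℝ (ckflFeasible s d k)).extremePoints ℝ at hvx
  change #(untightFacilities x s) ≤ _ ∧ #(untightEdges x s) ≤ _
  have hrigid := marginRigid_untightEdges hvx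
  have hdeg := card_untightFacilities_add_card_filter_le (x := x) (s := s)
    (extremePoints_convexHull_subset hvx).2.2.1
  set T := {i ∈ untightFacilities x s | ∑ j, x i j = s}
  by_cases hT : T = untightFacilities x s
  · rcases (untightEdges x s).eq_empty_or_nonempty with hE | ⟨⟨-, j₀⟩, -⟩
    · rw [hE, card_empty] at hdeg ⊢
      omega
    · have hE := (hrigid.erase (fun _ hp => hT ▸ fst_mem_untightFacilities hp) j₀).card_le
      have hm : 0 < Fintype.card κ := Fintype.card_pos_iff.mpr ⟨j₀⟩
      rw [card_erase_of_mem (mem_univ j₀), card_univ, hT] at hE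
      rw [hT] at hdeg
      omega
  · have hlt : #T < #(untightFacilities x s) :=
      card_lt_card (Finset.ssubset_iff_subset_ne.mpr ⟨filter_subset _ _, hT⟩)
    have hE := hrigid.card_le
    rw [card_univ] at hE
    omega

/-- At a vertex of the convex hull of feasible solutions of the
uniform-capacity CKFL MIP, the untight subgraph H (edges with 0 < x_{ij} < s)
contains at most m facilities and at most 2m - 1 edges, where m = |D|. -/
theorem stmt_9 {ι κ : Type*} [Fintype ι] [Fintype κ]
    (s : ℝ) (hs : 0 < s) (d : κ → ℝ) (k : ℕ)
    (S : Set ((ι → κ → ℝ) × (ι → ℝ)))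
    (hS : S = {p | (∀ i, p.2 i = 0 ∨ p.2 i = 1) ∧
      (∑ i, p.2 i) ≤ (k : ℝ) ∧
      (∀ i j, 0 ≤ p.1 i j) ∧
      (∀ j, (∑ i, p.1 i j) = d j) ∧
      (∀ i, (∑ j, p.1 i j) ≤ s * p.2 i)})
    (x : ι → κ → ℝ) (y : ι → ℝ)
    (hvx : (x, y) ∈ (convexHull ℝ S).extremePoints ℝ) :
    (Finset.univ.filter fun i : ι => ∃ j, 0 < x i j ∧ x i j < s).card ≤
        Fintype.card κ ∧
    (Finset.univ.filter fun p : ι × κ => 0 < x p.1 p.2 ∧ x p.1 p.2 < s).card ≤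
        2 * Fintype.card κ - 1 :=
  stmt_9_general s d k S hS x y hvx
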